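/- arXiv:1810.03477 — 5 statements merged into one kernel-verified Lean document; each statement's English description precedes it below -/
import Mathlib

section
/- Let a_1 = (1,0,0,0), a_2 = (0,1,0,0), a_3 = (0,0,1,0), a_4 = (0,0,0,1), and a_5,...,a_12 be the eight vectors (1/2)(1, ±1, ±1, ±1) in ℝ^4. Then for every v ∈ ℝ^4, the sum over k = 1 to 12 of (a_k · v)^4 equals (3/2)‖v‖⁴. -/
open scoped Matrix

/-- The twelve unit vectors in `ℝ⁴`: the four standard basis vectors together with
the eight vectors `(1/2)(1, ±1, ±1, ±1)`. -/
noncomputable def paperVecs : Matrix (Fin 12) (Fin 4) ℝ :=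
  !![1, 0, 0, 0;
     0, 1, 0, 0;
     0, 0, 1, 0;
     0, 0, 0, 1;
     1/2,  1/2,  1/2,  1/2;
     1/2,  1/2,  1/2, -1/2;
     1/2,  1/2, -1/2,  1/2;
     1/2,  1/2, -1/2, -1/2;
     1/2, -1/2,  1/2,  1/2;
     1/2, -1/2,  1/2, -1/2;
     1/2, -1/2, -1/2,  1/2;
     1/2, -1/2, -1/2, -1/2]

theorem sum_fourth_proj_eq (v : Fin 4 → ℝ) :
    ∑ k : Fin 12, (∑ i : Fin 4, paperVecs k i * v i) ^ 4
      = (3 / 2) * (∑ i : Fin 4, (v i) ^ 2) ^ 2 := by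
  simp [paperVecs, Fin.sum_univ_succ, Matrix.cons_val_zero, Matrix.cons_val_succ]
  ring
end

section
/- There does not exist a 4-dimensional random vector V = (V₁, V₂, V₃, V₄) such that a_k · V is uniformly distributed on [-√3, √3] for all k = 1, ..., 12, where a_1,...,a_4 are the standard basis vectors of ℝ^4 and a_5,...,a_12 are the eight vectors (1/2)(1, ±1, ±1, ±1). -/
open MeasureTheory
open scoped Matrix

/-- The uniform (normalized Lebesgue) probability measure on the interval [a, b]. -/
noncomputable def uniformIcc (a b : ℝ) : Measure ℝ :=
  (ENNReal.ofReal (b - a))⁻¹ • volume.restrict (Set.Icc a b)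

private lemma s3_pos : 0 < Real.sqrt 3 := Real.sqrt_pos.2 (by norm_num)
private lemma s3_sq : Real.sqrt 3 ^ 2 = 3 := Real.sq_sqrt (by norm_num)

private lemma uniform_pow (n : ℕ) :
    ∫ x, x ^ n ∂(uniformIcc (-Real.sqrt 3) (Real.sqrt 3))
      = (2 * Real.sqrt 3)⁻¹ * ((Real.sqrt 3 ^ (n+1) - (-Real.sqrt 3) ^ (n+1)) / (n+1)) := by
  have h : -Real.sqrt 3 ≤ Real.sqrt 3 := by linarith [s3_pos]
  rw [uniformIcc, integral_smul_measure, MeasureTheory.integral_Icc_eq_integral_Ioc,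
    ← intervalIntegral.integral_of_le h, integral_pow]
  congr 1
  rw [ENNReal.toReal_inv, ENNReal.toReal_ofReal (by linarith [s3_pos])]
  ring_nf

private lemma uniform_m4 : ∫ x, x ^ 4 ∂(uniformIcc (-Real.sqrt 3) (Real.sqrt 3)) = 9/5 := by
  rw [uniform_pow]
  have h5 : Real.sqrt 3 ^ 5 = 9 * Real.sqrt 3 := by
    have : Real.sqrt 3 ^ 5 = (Real.sqrt 3 ^ 2) ^ 2 * Real.sqrt 3 := by ring
    rw [this, s3_sq]; norm_num
  rw [show ((4:ℕ)+1) = 5 from rfl, neg_pow]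
  norm_num [h5]
  field_simp
  nlinarith [s3_sq, s3_pos]

private lemma uniform_m2 : ∫ x, x ^ 2 ∂(uniformIcc (-Real.sqrt 3) (Real.sqrt 3)) = 1 := by
  rw [uniform_pow]
  have h3 : Real.sqrt 3 ^ 3 = 3 * Real.sqrt 3 := by
    have : Real.sqrt 3 ^ 3 = Real.sqrt 3 ^ 2 * Real.sqrt 3 := by ring
    rw [this, s3_sq]
  rw [show ((2:ℕ)+1) = 3 from rfl, neg_pow]
  norm_num [h3]
  field_simp
  nlinarith [s3_sq, s3_pos]

private lemma uniform_compl :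
    (uniformIcc (-Real.sqrt 3) (Real.sqrt 3)) (Set.Icc (-Real.sqrt 3) (Real.sqrt 3))ᶜ = 0 := by
  rw [uniformIcc, Measure.smul_apply, Measure.restrict_apply measurableSet_Icc.compl]
  simp

private lemma key_identity (x : Fin 4 → ℝ) :
    ∑ k : Fin 12, (2/3 : ℝ) * (∑ i : Fin 4, paperVecs k i * x i) ^ 4
      = (∑ i : Fin 4, (x i) ^ 2) ^ 2 := by
  simp only [Fin.sum_univ_succ, Fin.sum_univ_zero, paperVecs, Matrix.cons_val',
    Matrix.cons_val_zero, Matrix.cons_val_one, Matrix.head_cons, Matrix.empty_val',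
    Matrix.cons_val_fin_one, Matrix.head_fin_const, Matrix.of_apply, Matrix.cons_val_succ]
  ring

private lemma basis_row0 (x : Fin 4 → ℝ) :
    ∑ j : Fin 4, paperVecs 0 j * x j = x 0 := by
  simp [paperVecs, Fin.sum_univ_four]
private lemma basis_row1 (x : Fin 4 → ℝ) :
    ∑ j : Fin 4, paperVecs 1 j * x j = x 1 := by
  simp [paperVecs, Fin.sum_univ_four]
private lemma basis_row2 (x : Fin 4 → ℝ) :
    ∑ j : Fin 4, paperVecs 2 j * x j = x 2 := by
  simp [paperVecs, Fin.sum_univ_four]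
private lemma basis_row3 (x : Fin 4 → ℝ) :
    ∑ j : Fin 4, paperVecs 3 j * x j = x 3 := by
  simp [paperVecs, Fin.sum_univ_four]

theorem no_random_vector_all_proj_uniform :
    ¬ ∃ (Ω : Type) (_ : MeasurableSpace Ω) (μ : Measure Ω) (_ : IsProbabilityMeasure μ)
      (V : Ω → Fin 4 → ℝ), (∀ i, Measurable fun ω => V ω i) ∧
      ∀ k : Fin 12,
        Measure.map (fun ω => ∑ i : Fin 4, paperVecs k i * V ω i) μ
          = uniformIcc (-Real.sqrt 3) (Real.sqrt 3) := by
  rintro ⟨Ω, mΩ, μ, hprob, V, hVmeas, hmap⟩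
  set s3 := Real.sqrt 3 with hs3
  -- the projections
  have hLmeas : ∀ k : Fin 12, Measurable (fun ω => ∑ i : Fin 4, paperVecs k i * V ω i) :=
    fun k => Finset.measurable_sum _ (fun i _ => (hVmeas i).const_mul _)
  -- a.e. bound on each projection
  have hbound : ∀ k : Fin 12, ∀ᵐ ω ∂μ,
      (∑ i : Fin 4, paperVecs k i * V ω i) ∈ Set.Icc (-s3) s3 := by
    intro k
    have h0 : μ ((fun ω => ∑ i : Fin 4, paperVecs k i * V ω i) ⁻¹'
        (Set.Icc (-s3) s3)ᶜ) = 0 := by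
      rw [← Measure.map_apply (hLmeas k) measurableSet_Icc.compl, hmap k]
      exact uniform_compl
    filter_upwards [measure_eq_zero_iff_ae_notMem.mp h0] with ω hω
    simpa using hω
  -- fourth and second moments
  have hmom : ∀ (n : ℕ) (k : Fin 12),
      ∫ ω, (∑ i : Fin 4, paperVecs k i * V ω i) ^ n ∂μ
        = ∫ x, x ^ n ∂(uniformIcc (-s3) s3) := by
    intro n k
    rw [← hmap k, integral_map (hLmeas k).aemeasurable]
    exact (measurable_id.pow_const n).aestronglyMeasurable
  -- integrability of powers of projections
  have hint : ∀ (n : ℕ) (k : Fin 12),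
      Integrable (fun ω => (∑ i : Fin 4, paperVecs k i * V ω i) ^ n) μ := by
    intro n k
    refine Integrable.mono' (integrable_const (s3 ^ n)) ((hLmeas k).pow_const n).aestronglyMeasurable ?_
    filter_upwards [hbound k] with ω hω
    rw [Real.norm_eq_abs, abs_pow]
    exact pow_le_pow_left₀ (abs_nonneg _) (abs_le.mpr ⟨hω.1, hω.2⟩) n
  -- W = sum of squares of coordinates
  set W : Ω → ℝ := fun ω => ∑ i : Fin 4, (V ω i) ^ 2 with hW
  have hWexp : W = fun ω => (∑ j : Fin 4, paperVecs 0 j * V ω j) ^ 2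
      + (∑ j : Fin 4, paperVecs 1 j * V ω j) ^ 2
      + (∑ j : Fin 4, paperVecs 2 j * V ω j) ^ 2
      + (∑ j : Fin 4, paperVecs 3 j * V ω j) ^ 2 := by
    funext ω
    rw [basis_row0 (V ω), basis_row1 (V ω), basis_row2 (V ω), basis_row3 (V ω)]
    show ∑ i : Fin 4, V ω i ^ 2 = _
    rw [Fin.sum_univ_four]
  -- Integrability of W and W^2
  have hWint : Integrable W μ := by
    rw [hWexp]
    exact (((hint 2 0).add (hint 2 1)).add (hint 2 2)).add (hint 2 3)
  have hW2int : Integrable (fun ω => (W ω) ^ 2) μ := by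
    have heq : (fun ω => (W ω) ^ 2)
        = fun ω => ∑ k : Fin 12, (2/3 : ℝ) * (∑ i : Fin 4, paperVecs k i * V ω i) ^ 4 := by
      funext ω; rw [key_identity]
    rw [heq]
    exact integrable_finset_sum _ (fun k _ => (hint 4 k).const_mul _)
  -- ∫ W = 4
  have hm2 : ∀ k : Fin 12, ∫ ω, (∑ i : Fin 4, paperVecs k i * V ω i) ^ 2 ∂μ = 1 := by
    intro k; rw [hmom 2]; exact uniform_m2
  have i01 : Integrable (fun ω => (∑ j : Fin 4, paperVecs 0 j * V ω j) ^ 2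
      + (∑ j : Fin 4, paperVecs 1 j * V ω j) ^ 2) μ := (hint 2 0).add (hint 2 1)
  have i012 : Integrable (fun ω => (∑ j : Fin 4, paperVecs 0 j * V ω j) ^ 2
      + (∑ j : Fin 4, paperVecs 1 j * V ω j) ^ 2
      + (∑ j : Fin 4, paperVecs 2 j * V ω j) ^ 2) μ := i01.add (hint 2 2)
  have hWval : ∫ ω, W ω ∂μ = 4 := by
    simp only [hWexp]
    rw [integral_add i012 (hint 2 3), integral_add i01 (hint 2 2),
      integral_add (hint 2 0) (hint 2 1), hm2 0, hm2 1, hm2 2, hm2 3]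
    norm_num
  -- ∫ W^2 = 72/5
  have hW2val : ∫ ω, (W ω) ^ 2 ∂μ = 72/5 := by
    have heq : (fun ω => (W ω) ^ 2)
        = fun ω => ∑ k : Fin 12, (2/3 : ℝ) * (∑ i : Fin 4, paperVecs k i * V ω i) ^ 4 := by
      funext ω; rw [key_identity]
    rw [heq, integral_finset_sum _ (fun k _ => (hint 4 k).const_mul _)]
    have hv : ∀ k : Fin 12, ∫ ω, (2/3 : ℝ) * (∑ i : Fin 4, paperVecs k i * V ω i) ^ 4 ∂μ
        = (2/3) * (9/5) := by
      intro k
      rw [integral_const_mul, hmom 4, uniform_m4]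
    rw [Finset.sum_congr rfl (fun k _ => hv k)]
    norm_num
  -- contradiction: 0 ≤ ∫ (W - 4)^2 = 72/5 - 8*4 + 16 = -8/5
  have hint1 : Integrable (fun ω => W ω ^ 2 - 8 * W ω) μ := hW2int.sub (hWint.const_mul 8)
  have hnn : (0:ℝ) ≤ ∫ ω, (W ω - 4) ^ 2 ∂μ :=
    integral_nonneg (fun ω => sq_nonneg _)
  have hexp : ∫ ω, (W ω - 4) ^ 2 ∂μ = ∫ ω, (W ω ^ 2 - 8 * W ω + 16) ∂μ := by
    congr 1; funext ω; ring
  rw [hexp, integral_add hint1 (integrable_const 16),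
    integral_sub hW2int (hWint.const_mul 8), integral_const_mul, hWval, hW2val,
    integral_const] at hnn
  simp [measure_univ] at hnn
  norm_num at hnn
end

section
/- There does not exist a 4-dimensional random vector V such that for every unit vector a ∈ ℝ^4, the random variable a · V is uniformly distributed on [-1, 1]. -/
/-!
For a unit vector `u`, the law of `⟪u, V⟫` fixes `𝔼⟪u, V⟫² = 1/3` and `𝔼⟪u, V⟫⁴ = 1/5`; by
homogeneity and polarization this determines `𝔼 ⟪a, V⟫² ⟪b, V⟫² = (‖a‖²‖b‖² + 2⟪a, b⟫²)/15`
for all `a, b`. Expanding `‖V‖²` in an orthonormal basis of `ℝⁿ` then gives `𝔼‖V‖² = n/3` and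
`𝔼‖V‖⁴ = n(n+2)/15`, so `0 ≤ Var ‖V‖² = 2n(3-n)/45`, which forces `n ≤ 3`.
-/

open MeasureTheory
open scoped RealInnerProductSpace

theorem isProbabilityMeasure_uniformIcc {a b : ℝ} (hab : a < b) :
    IsProbabilityMeasure (uniformIcc a b) :=
  ⟨by simp [uniformIcc, ENNReal.inv_mul_cancel, hab]⟩

theorem Continuous.integrable_uniformIcc {f : ℝ → ℝ} (hf : Continuous f) {a b : ℝ}
    (hab : a < b) : Integrable f (uniformIcc a b) :=
  hf.integrableOn_Icc.smul_measure (by simpa using hab)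

theorem integral_pow_uniformIcc {a b : ℝ} (hab : a < b) (n : ℕ) :
    ∫ x, x ^ n ∂uniformIcc a b = (b ^ (n + 1) - a ^ (n + 1)) / ((n + 1) * (b - a)) := by
  rw [uniformIcc, integral_smul_measure, integral_Icc_eq_integral_Ioc,
    ← intervalIntegral.integral_of_le hab.le, integral_pow, ENNReal.toReal_inv,
    ENNReal.toReal_ofReal (sub_nonneg.2 hab.le), smul_eq_mul]
  field_simp

section InnerProductSpace

variable {E : Type*} [NormedAddCommGroup E] [InnerProductSpace ℝ E]

theorem norm_inv_norm_smul_self {a : E} (ha : a ≠ 0) : ‖‖a‖⁻¹ • a‖ = 1 := by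
  rw [norm_smul, norm_inv, norm_norm, inv_mul_cancel₀ (norm_ne_zero_iff.2 ha)]

theorem real_inner_eq_norm_mul_inner_inv_norm_smul {a : E} (ha : a ≠ 0) (v : E) :
    ⟪a, v⟫ = ‖a‖ * ⟪‖a‖⁻¹ • a, v⟫ := by
  rw [real_inner_smul_left, ← mul_assoc, mul_inv_cancel₀ (norm_ne_zero_iff.2 ha), one_mul]

theorem inner_sq_mul_inner_sq_eq_fourth_powers (a b v : E) :
    ⟪a, v⟫ ^ 2 * ⟪b, v⟫ ^ 2 =
      (⟪a + b, v⟫ ^ 4 + ⟪a - b, v⟫ ^ 4 - 2 * ⟪a, v⟫ ^ 4 - 2 * ⟪b, v⟫ ^ 4) / 12 := by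
  rw [inner_add_left, inner_sub_left]
  ring

theorem OrthonormalBasis.norm_pow_four_eq_sum {ι : Type*} [Fintype ι]
    (b : OrthonormalBasis ι ℝ E) (v : E) :
    ‖v‖ ^ 4 = ∑ i, ∑ j, ⟪b i, v⟫ ^ 2 * ⟪b j, v⟫ ^ 2 := by
  rw [show ‖v‖ ^ 4 = ‖v‖ ^ 2 * ‖v‖ ^ 2 by ring, ← b.sum_sq_inner_right, Finset.sum_mul_sum]

end InnerProductSpace

def HasUniformProjections {Ω E : Type*} [MeasurableSpace Ω] [NormedAddCommGroup E]
    [InnerProductSpace ℝ E] (μ : Measure Ω) (V : Ω → E) : Prop :=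
  ∀ u : E, ‖u‖ = 1 → μ.map (fun ω => ⟪u, V ω⟫) = uniformIcc (-1) 1

namespace HasUniformProjections

variable {Ω E : Type*} [MeasurableSpace Ω] [NormedAddCommGroup E] [InnerProductSpace ℝ E]
  {μ : Measure Ω} {V : Ω → E}

theorem aemeasurable_inner_of_norm_eq_one (hV : HasUniformProjections μ V) {u : E}
    (hu : ‖u‖ = 1) : AEMeasurable (fun ω => ⟪u, V ω⟫) μ := by
  have := isProbabilityMeasure_uniformIcc (by norm_num : (-1 : ℝ) < 1)
  by_contra h
  exact IsProbabilityMeasure.ne_zero (uniformIcc (-1) 1)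
    (by rw [← hV u hu, Measure.map_of_not_aemeasurable h])

theorem aemeasurable_inner (hV : HasUniformProjections μ V) (a : E) :
    AEMeasurable (fun ω => ⟪a, V ω⟫) μ := by
  rcases eq_or_ne a 0 with rfl | ha
  · simp only [inner_zero_left]
    exact aemeasurable_const
  · simp_rw [real_inner_eq_norm_mul_inner_inv_norm_smul ha]
    exact (hV.aemeasurable_inner_of_norm_eq_one (norm_inv_norm_smul_self ha)).const_mul _

theorem integrable_inner_pow (hV : HasUniformProjections μ V) [IsFiniteMeasure μ] (a : E)
    (n : ℕ) : Integrable (fun ω => ⟪a, V ω⟫ ^ n) μ := by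
  rcases eq_or_ne a 0 with rfl | ha
  · simp only [inner_zero_left]
    exact integrable_const _
  · have hu := norm_inv_norm_smul_self ha
    have hunit : Integrable (fun ω => ⟪‖a‖⁻¹ • a, V ω⟫ ^ n) μ :=
      (integrable_map_measure (continuous_pow n).aestronglyMeasurable
        (hV.aemeasurable_inner_of_norm_eq_one hu)).1
        (by rw [hV _ hu]; exact (continuous_pow n).integrable_uniformIcc (by norm_num))
    simp_rw [real_inner_eq_norm_mul_inner_inv_norm_smul ha, mul_pow]
    exact hunit.const_mul _

variable [IsProbabilityMeasure μ]

theorem integral_inner_pow (hV : HasUniformProjections μ V) (a : E) (n : ℕ) :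
    ∫ ω, ⟪a, V ω⟫ ^ n ∂μ = ‖a‖ ^ n * ∫ x, x ^ n ∂uniformIcc (-1) 1 := by
  rcases eq_or_ne a 0 with rfl | ha
  · rcases eq_or_ne n 0 with rfl | hn
    · have := isProbabilityMeasure_uniformIcc (by norm_num : (-1 : ℝ) < 1)
      simp
    · simp [zero_pow hn]
  · have hu := norm_inv_norm_smul_self ha
    simp_rw [real_inner_eq_norm_mul_inner_inv_norm_smul ha, mul_pow, integral_const_mul,
      ← hV _ hu]
    rw [integral_map (hV.aemeasurable_inner_of_norm_eq_one hu)
      (continuous_pow n).aestronglyMeasurable]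

theorem integral_inner_sq (hV : HasUniformProjections μ V) (a : E) :
    ∫ ω, ⟪a, V ω⟫ ^ 2 ∂μ = ‖a‖ ^ 2 / 3 := by
  rw [hV.integral_inner_pow, integral_pow_uniformIcc (by norm_num)]
  norm_num
  ring

theorem integral_inner_pow_four (hV : HasUniformProjections μ V) (a : E) :
    ∫ ω, ⟪a, V ω⟫ ^ 4 ∂μ = ‖a‖ ^ 4 / 5 := by
  rw [hV.integral_inner_pow, integral_pow_uniformIcc (by norm_num)]
  norm_num
  ring

theorem integrable_inner_sq_mul_inner_sq (hV : HasUniformProjections μ V) (a b : E) :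
    Integrable (fun ω => ⟪a, V ω⟫ ^ 2 * ⟪b, V ω⟫ ^ 2) μ := by
  have hI := hV.integrable_inner_pow (n := 4)
  simp_rw [inner_sq_mul_inner_sq_eq_fourth_powers a b]
  fun_prop

theorem integral_inner_sq_mul_inner_sq (hV : HasUniformProjections μ V) (a b : E) :
    ∫ ω, ⟪a, V ω⟫ ^ 2 * ⟪b, V ω⟫ ^ 2 ∂μ = (‖a‖ ^ 2 * ‖b‖ ^ 2 + 2 * ⟪a, b⟫ ^ 2) / 15 := by
  have hI := hV.integrable_inner_pow (n := 4)
  simp_rw [inner_sq_mul_inner_sq_eq_fourth_powers a b]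
  rw [integral_div, integral_sub, integral_sub, integral_add, integral_const_mul,
    integral_const_mul]
  · simp only [integral_inner_pow_four hV]
    have h4 : ∀ x : E, ‖x‖ ^ 4 = (‖x‖ ^ 2) ^ 2 := fun x => by ring
    rw [h4, h4 (a - b), norm_add_sq_real, norm_sub_sq_real]
    ring
  all_goals fun_prop

section FiniteDimensional

open Module

variable [FiniteDimensional ℝ E]

theorem integral_norm_sq (hV : HasUniformProjections μ V) :
    ∫ ω, ‖V ω‖ ^ 2 ∂μ = finrank ℝ E / 3 := by
  simp_rw [← (stdOrthonormalBasis ℝ E).sum_sq_inner_right]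
  rw [integral_finsetSum _ fun i _ => hV.integrable_inner_pow _ 2]
  simp [hV.integral_inner_sq, div_eq_mul_inv]

theorem integrable_norm_pow_four (hV : HasUniformProjections μ V) :
    Integrable (fun ω => ‖V ω‖ ^ 4) μ := by
  simp_rw [(stdOrthonormalBasis ℝ E).norm_pow_four_eq_sum]
  exact integrable_finsetSum _ fun i _ => integrable_finsetSum _ fun j _ =>
    hV.integrable_inner_sq_mul_inner_sq _ _

theorem integral_norm_pow_four (hV : HasUniformProjections μ V) :
    ∫ ω, ‖V ω‖ ^ 4 ∂μ = finrank ℝ E * (finrank ℝ E + 2) / 15 := by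
  simp_rw [(stdOrthonormalBasis ℝ E).norm_pow_four_eq_sum]
  rw [integral_finsetSum _ fun i _ => integrable_finsetSum _ fun j _ =>
    hV.integrable_inner_sq_mul_inner_sq _ _]
  simp_rw [integral_finsetSum _ fun j _ => hV.integrable_inner_sq_mul_inner_sq _ _,
    hV.integral_inner_sq_mul_inner_sq, OrthonormalBasis.norm_eq_one, ← Finset.sum_div,
    Finset.sum_add_distrib, ← Finset.mul_sum, OrthonormalBasis.sum_sq_inner_left,
    OrthonormalBasis.norm_eq_one]
  simp
  ring

theorem memLp_norm_sq (hV : HasUniformProjections μ V) :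
    MemLp (fun ω => ‖V ω‖ ^ 2) 2 μ := by
  refine (memLp_two_iff_integrable_sq ?_).2 ?_
  · simp_rw [← (stdOrthonormalBasis ℝ E).sum_sq_inner_right]
    exact (Finset.aemeasurable_fun_sum _ fun i _ =>
      (hV.aemeasurable_inner _).pow_const 2).aestronglyMeasurable
  · simpa only [← pow_mul] using hV.integrable_norm_pow_four

theorem finrank_le_three (hV : HasUniformProjections μ V) : finrank ℝ E ≤ 3 := by
  have hvar := ProbabilityTheory.variance_nonneg (fun ω => ‖V ω‖ ^ 2) μ
  rw [ProbabilityTheory.variance_eq_sub hV.memLp_norm_sq] at hvar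
  simp only [Pi.pow_apply, ← pow_mul, hV.integral_norm_pow_four, hV.integral_norm_sq] at hvar
  have : (finrank ℝ E : ℝ) ≤ 3 := by nlinarith
  exact_mod_cast this

end FiniteDimensional

end HasUniformProjections

/-- There is no 4-dimensional random vector all of whose one-dimensional projections
along unit vectors are uniform on [-1, 1]. -/
theorem no_archimedes_dim_four :
    ¬ ∃ (Ω : Type) (_ : MeasurableSpace Ω) (μ : Measure Ω) (_ : IsProbabilityMeasure μ)
      (V : Ω → EuclideanSpace ℝ (Fin 4)), Measurable V ∧
      ∀ a : EuclideanSpace ℝ (Fin 4), ‖a‖ = 1 →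
        Measure.map (fun ω => ⟪a, V ω⟫) μ = uniformIcc (-1) 1 := by
  rintro ⟨Ω, _, μ, _, V, -, hV⟩
  simpa using HasUniformProjections.finrank_le_three (μ := μ) hV
end

section
/- Let A ∈ ℝ^{d×k} with R = AAᵀ, let B be the invertible k × k matrix formed by the first k rows of A, and let Y = (Y₁, ..., Y_d) be a random vector with E[Y] = 0 and E[Y Yᵀ] = R. Set X = (Y₁, ..., Y_k) and V = B⁻¹X. Then E[V] = 0, E[V Vᵀ] = I_k, and AV = Y almost surely. -/
/-!
Let `S` select the first `k` coordinates, so `X = S Y`, `S A = B` and `V = (B⁻¹ S) Y`.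
Second moments of linear images transform as `E[(PY)(PY)ᵀ] = P R Pᵀ`, which gives
`E[V Vᵀ] = B⁻¹ B Bᵀ B⁻ᵀ = I`. The residual `A V - Y = M Y` with `M = A B⁻¹ S - I`
satisfies `M A = 0`, so its second moment `M A Aᵀ Mᵀ` vanishes, and a square-integrable
coordinate with zero second moment vanishes almost surely.
-/

open MeasureTheory
open scoped Matrix

namespace ProbabilityTheory

variable {Ω ι κ : Type*} [MeasurableSpace Ω] {μ : Measure Ω} [Fintype ι]

noncomputable def secondMoment (μ : Measure Ω) (Z : Ω → ι → ℝ) : Matrix ι ι ℝ :=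
  Matrix.of fun i j => ∫ ω, Z ω i * Z ω j ∂μ

lemma memLp_mulVec_apply {Z : Ω → ι → ℝ} (hZ : ∀ i, MemLp (fun ω => Z ω i) 2 μ)
    (P : Matrix κ ι ℝ) (j : κ) : MemLp (fun ω => (P *ᵥ Z ω) j) 2 μ := by
  simpa only [Matrix.mulVec, dotProduct] using
    memLp_finsetSum Finset.univ fun i _ => (hZ i).const_mul (P j i)

lemma integral_mulVec_apply {Z : Ω → ι → ℝ} (hZ : ∀ i, Integrable (fun ω => Z ω i) μ)
    (P : Matrix κ ι ℝ) (j : κ) :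
    ∫ ω, (P *ᵥ Z ω) j ∂μ = (P *ᵥ fun i => ∫ ω, Z ω i ∂μ) j := by
  simp only [Matrix.mulVec, dotProduct]
  rw [integral_finsetSum _ fun i _ => (hZ i).const_mul _]
  simp only [integral_const_mul]

lemma secondMoment_mulVec {Z : Ω → ι → ℝ} (hZ : ∀ i, MemLp (fun ω => Z ω i) 2 μ)
    [Fintype κ] (P : Matrix κ ι ℝ) :
    secondMoment μ (fun ω => P *ᵥ Z ω) = P * secondMoment μ Z * Pᵀ := by
  ext j l
  have hZZ : ∀ p q, Integrable (fun ω => Z ω p * Z ω q) μ :=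
    fun p q => (hZ p).integrable_mul (hZ q)
  have hexpand : ∀ ω, (P *ᵥ Z ω) j * (P *ᵥ Z ω) l
      = ∑ p, ∑ q, P j p * P l q * (Z ω p * Z ω q) := by
    intro ω
    simp only [Matrix.mulVec, dotProduct, Finset.sum_mul_sum]
    exact Finset.sum_congr rfl fun p _ => Finset.sum_congr rfl fun q _ => by ring
  simp only [secondMoment, Matrix.of_apply, hexpand, Matrix.mul_apply, Matrix.transpose_apply,
    Finset.sum_mul]
  rw [integral_finsetSum _ fun p _ => integrable_finsetSum _ fun q _ => (hZZ p q).const_mul _,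
    Finset.sum_comm]
  refine Finset.sum_congr rfl fun p _ => ?_
  rw [integral_finsetSum _ fun q _ => (hZZ p q).const_mul _]
  exact Finset.sum_congr rfl fun q _ => by rw [integral_const_mul]; ring

lemma ae_eq_zero_of_secondMoment_diag_eq_zero {Z : Ω → ι → ℝ}
    (hZ : ∀ i, MemLp (fun ω => Z ω i) 2 μ) (h : ∀ i, secondMoment μ Z i i = 0) :
    ∀ᵐ ω ∂μ, Z ω = 0 := by
  have hsq : ∀ i, (fun ω => Z ω i * Z ω i) =ᵐ[μ] 0 := fun i =>
    (integral_eq_zero_iff_of_nonneg (fun ω => mul_self_nonneg _)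
      ((hZ i).integrable_mul (hZ i))).mp (h i)
  filter_upwards [ae_all_iff.mpr hsq] with ω hω
  exact funext fun i => mul_self_eq_zero.mp (hω i)

end ProbabilityTheory

namespace Matrix

variable {m n : Type*} [Fintype m] [Fintype n] [DecidableEq n]

lemma nonsing_inv_mul_mul_transpose_eq_one {S : Matrix n m ℝ} {A : Matrix m n ℝ}
    {B : Matrix n n ℝ} (hSA : S * A = B) (hB : IsUnit B.det) :
    B⁻¹ * S * (A * Aᵀ) * (B⁻¹ * S)ᵀ = 1 := by
  have hBT : IsUnit Bᵀ.det := by rwa [det_transpose]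
  calc B⁻¹ * S * (A * Aᵀ) * (B⁻¹ * S)ᵀ = B⁻¹ * (S * A) * ((S * A)ᵀ * B⁻¹ᵀ) := by
        simp only [transpose_mul, Matrix.mul_assoc]
    _ = 1 := by
        rw [hSA, transpose_nonsing_inv, nonsing_inv_mul _ hB, mul_nonsing_inv _ hBT, one_mul]

end Matrix

open ProbabilityTheory

theorem transformed_vector_props_general {Ω : Type*} [MeasurableSpace Ω] (μ : Measure Ω)
    [IsProbabilityMeasure μ] {d k : ℕ} (hk : k ≤ d)
    (R : Matrix (Fin d) (Fin d) ℝ) (A : Matrix (Fin d) (Fin k) ℝ)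
    (hA : R = A * Aᵀ)
    (B : Matrix (Fin k) (Fin k) ℝ) (hB : B = Matrix.of fun i j : Fin k => A (Fin.castLE hk i) j)
    (hBinv : IsUnit B)
    (Y : Ω → Fin d → ℝ)
    (hYL2 : ∀ i, MemLp (fun ω => Y ω i) 2 μ)
    (hmean : ∀ i, (∫ ω, Y ω i ∂μ) = 0)
    (hcov : ∀ i j, (∫ ω, Y ω i * Y ω j ∂μ) = R i j)
    (X : Ω → Fin k → ℝ) (hX : X = fun ω i => Y ω (Fin.castLE hk i))
    (V : Ω → Fin k → ℝ) (hV : V = fun ω => B⁻¹.mulVec (X ω)) :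
    (∀ i, (∫ ω, V ω i ∂μ) = 0) ∧
    (∀ i j, (∫ ω, V ω i * V ω j ∂μ) = (1 : Matrix (Fin k) (Fin k) ℝ) i j) ∧
    (∀ᵐ ω ∂μ, A.mulVec (V ω) = Y ω) := by
  have hBdet : IsUnit B.det := (Matrix.isUnit_iff_isUnit_det B).mp hBinv
  set S : Matrix (Fin k) (Fin d) ℝ := (1 : Matrix (Fin d) (Fin d) ℝ).submatrix (Fin.castLE hk) id
  have hSA : S * A = B := by
    ext i j; simp [S, hB, Matrix.mul_apply, Matrix.one_apply]
  have hVY : V = fun ω => (B⁻¹ * S) *ᵥ Y ω := by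
    ext ω : 1
    rw [hV, hX, ← Matrix.mulVec_mulVec]
    ext i; simp [S, Matrix.mulVec, dotProduct, Matrix.one_apply]
  have hRY : secondMoment μ Y = A * Aᵀ := by
    ext i j; exact (hcov i j).trans (by rw [hA])
  refine ⟨fun i => ?_, fun i j => ?_, ?_⟩
  · rw [hVY, integral_mulVec_apply fun i => (hYL2 i).integrable one_le_two, funext hmean]
    exact congrFun (Matrix.mulVec_zero _) i
  · have hVV : secondMoment μ V = 1 := by
      rw [hVY, secondMoment_mulVec hYL2, hRY,
        Matrix.nonsing_inv_mul_mul_transpose_eq_one hSA hBdet]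
    exact congrFun (congrFun hVV i) j
  · set M := A * B⁻¹ * S - 1
    have hMA : M * A = 0 := by
      rw [Matrix.sub_mul, Matrix.mul_assoc, hSA, Matrix.nonsing_inv_mul_cancel_right _ _ hBdet,
        Matrix.one_mul, sub_self]
    have hres : ∀ ω, A *ᵥ V ω - Y ω = M *ᵥ Y ω := fun ω => by
      rw [hVY, Matrix.sub_mulVec, Matrix.one_mulVec, Matrix.mulVec_mulVec, Matrix.mul_assoc]
    have hM0 : ∀ᵐ ω ∂μ, M *ᵥ Y ω = 0 :=
      ae_eq_zero_of_secondMoment_diag_eq_zero (memLp_mulVec_apply hYL2 M) fun i => by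
        rw [secondMoment_mulVec hYL2, hRY, ← Matrix.mul_assoc, hMA]; simp
    filter_upwards [hM0] with ω hω
    rw [← sub_eq_zero, hres, hω]

/-- Given R = AAᵀ with the top k × k block B of A invertible, and a mean-zero
square-integrable random vector Y with second-moment matrix R, the random vector
V = B⁻¹X (where X consists of the first k components of Y) has mean zero,
second-moment matrix I_k, and satisfies AV = Y almost surely. -/
theorem transformed_vector_props {Ω : Type*} [MeasurableSpace Ω] (μ : Measure Ω)
    [IsProbabilityMeasure μ] {d k : ℕ} (hk : k ≤ d)
    (R : Matrix (Fin d) (Fin d) ℝ) (A : Matrix (Fin d) (Fin k) ℝ)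
    (hA : R = A * Aᵀ)
    (B : Matrix (Fin k) (Fin k) ℝ) (hB : B = Matrix.of fun i j : Fin k => A (Fin.castLE hk i) j)
    (hBinv : IsUnit B)
    (Y : Ω → Fin d → ℝ) (hYmeas : ∀ i, Measurable fun ω => Y ω i)
    (hYL2 : ∀ i, MemLp (fun ω => Y ω i) 2 μ)
    (hmean : ∀ i, (∫ ω, Y ω i ∂μ) = 0)
    (hcov : ∀ i j, (∫ ω, Y ω i * Y ω j ∂μ) = R i j)
    (X : Ω → Fin k → ℝ) (hX : X = fun ω i => Y ω (Fin.castLE hk i))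
    (V : Ω → Fin k → ℝ) (hV : V = fun ω => B⁻¹.mulVec (X ω)) :
    (∀ i, (∫ ω, V ω i ∂μ) = 0) ∧
    (∀ i j, (∫ ω, V ω i * V ω j ∂μ) = (1 : Matrix (Fin k) (Fin k) ℝ) i j) ∧
    (∀ᵐ ω ∂μ, A.mulVec (V ω) = Y ω) :=
  transformed_vector_props_general μ hk R A hA B hB hBinv Y hYL2 hmean hcov X hX V hV
end

section
/- The set S_d of d × d Spearman's rho matrices is convex: if R₁ and R₂ are Spearman's rho matrices and t ∈ [0,1], then tR₁ + (1-t)R₂ is a Spearman's rho matrix. -/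
open MeasureTheory
open scoped Matrix

/-- `R` is a Spearman's rho matrix if there is a random vector `X` with continuous
marginal distributions whose matrix of pairwise Spearman rank correlations
`12 * E[F_i(X_i) F_j(X_j)] - 3` is `R`, where `F_i` is the cdf of `X_i`. -/
def IsSpearmanMatrix {d : ℕ} (R : Matrix (Fin d) (Fin d) ℝ) : Prop :=
  ∃ (Ω : Type) (_ : MeasurableSpace Ω) (μ : Measure Ω) (_ : IsProbabilityMeasure μ)
    (X : Ω → Fin d → ℝ),
    (∀ i, Measurable fun ω => X ω i) ∧
    (∀ i (x : ℝ), Measure.map (fun ω => X ω i) μ {x} = 0) ∧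
    ∀ i j, R i j =
      12 * (∫ ω, ProbabilityTheory.cdf (Measure.map (fun ω' => X ω' i) μ) (X ω i) *
        ProbabilityTheory.cdf (Measure.map (fun ω' => X ω' j) μ) (X ω j) ∂μ) - 3

/-!
Replacing each `X_i` by its probability integral transform `F_i(X_i)` leaves the defining
integrals unchanged and makes every marginal uniform on `[0, 1]`, where the uniform cdf is the
identity. So a Spearman matrix is `12 E[U_i U_j] - 3` for a vector `U` with uniform marginals, and
conversely. Mixing two such vectors (on the disjoint union of the sample spaces) keeps the
marginals uniform, while `E[U_i U_j]` is affine in the mixing weight.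
-/

open MeasureTheory ProbabilityTheory Set Filter Topology

lemma Sum.comp_elim' {α β γ δ : Type*} (f : γ → δ) (g : α → γ) (h : β → γ) :
    (fun x => f (Sum.elim g h x)) = Sum.elim (fun a => f (g a)) (fun b => f (h b)) :=
  Sum.comp_elim f g h

lemma Monotone.preimage_Iic_eq_Iic {α β : Type*} [ConditionallyCompleteLinearOrder α]
    [TopologicalSpace α] [OrderTopology α] [DenselyOrdered α] [NoMaxOrder α] [LinearOrder β]
    [TopologicalSpace β] [OrderClosedTopology β] {f : α → β} (hf : Monotone f)
    (hc : Continuous f) {u : β} (hne : (f ⁻¹' Iic u).Nonempty) (hbdd : BddAbove (f ⁻¹' Iic u)) :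
    ∃ a, f ⁻¹' Iic u = Iic a ∧ f a = u := by
  set S := f ⁻¹' Iic u
  have ha : sSup S ∈ S := (isClosed_Iic.preimage hc).csSup_mem hne hbdd
  refine ⟨sSup S, subset_antisymm (fun x hx => le_csSup hbdd hx)
    (fun x hx => (hf hx).trans ha), le_antisymm ha ?_⟩
  by_contra! hlt
  obtain ⟨b, hab, hb⟩ := ((hc.tendsto _).eventually (eventually_lt_nhds hlt)).exists_gt
  exact (le_csSup hbdd (le_of_lt hb : f b ≤ u)).not_gt hab

instance : IsProbabilityMeasure (volume.restrict (Icc (0 : ℝ) 1)) :=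
  ⟨by rw [Measure.restrict_apply_univ, Real.volume_Icc, sub_zero, ENNReal.ofReal_one]⟩

lemma volume_restrict_Icc_zero_one_Iic (u : ℝ) :
    volume.restrict (Icc (0 : ℝ) 1) (Iic u) = ENNReal.ofReal (min u 1) := by
  have : Iic u ∩ Icc 0 1 = Icc 0 (min u 1) := by ext; simp [and_left_comm]
  rw [Measure.restrict_apply measurableSet_Iic, this, Real.volume_Icc, sub_zero]

namespace ProbabilityTheory

lemma cdf_volume_restrict_Icc_zero_one {u : ℝ} (hu : u ∈ Icc (0 : ℝ) 1) :
    cdf (volume.restrict (Icc 0 1)) u = u := by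
  have h := ofReal_cdf (volume.restrict (Icc (0 : ℝ) 1)) u
  rwa [volume_restrict_Icc_zero_one_Iic, min_eq_left hu.2,
    ENNReal.ofReal_eq_ofReal_iff (cdf_nonneg _ _) hu.1] at h

variable (μ : Measure ℝ) [IsProbabilityMeasure μ] [NullSingletonClass μ]

lemma continuous_cdf : Continuous (cdf μ) := by
  refine continuous_iff_continuousAt.2 fun x => ?_
  have h : (cdf μ).measure {x} = 0 := by rw [measure_cdf]; exact measure_singleton x
  rw [StieltjesFunction.measure_singleton, ENNReal.ofReal_eq_zero] at h
  rw [(monotone_cdf μ).continuousAt_iff_leftLim_eq_rightLim, StieltjesFunction.rightLim_eq]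
  exact le_antisymm ((monotone_cdf μ).leftLim_le le_rfl) (by linarith)

lemma measure_cdf_preimage_Iic (u : ℝ) : μ (cdf μ ⁻¹' Iic u) = ENNReal.ofReal (min u 1) := by
  rcases le_or_gt 1 u with hu1 | hu1
  · rw [min_eq_right hu1, ENNReal.ofReal_one, ← measure_univ (μ := μ)]
    exact congrArg μ (eq_univ_of_forall fun x => (cdf_le_one μ x).trans hu1)
  rw [min_eq_left hu1.le]
  rcases (cdf μ ⁻¹' Iic u).eq_empty_or_nonempty with hempty | hne
  · have hu0 : u ≤ 0 := by
      by_contra! hu0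
      obtain ⟨x, hx⟩ := ((tendsto_cdf_atBot μ).eventually (eventually_lt_nhds hu0)).exists
      exact hempty.subset (le_of_lt hx : cdf μ x ≤ u)
    rw [hempty, measure_empty, ENNReal.ofReal_of_nonpos hu0]
  · obtain ⟨x₀, hx₀⟩ := ((tendsto_cdf_atTop μ).eventually (eventually_gt_nhds hu1)).exists
    have hbdd : BddAbove (cdf μ ⁻¹' Iic u) :=
      ⟨x₀, fun x hx => ((monotone_cdf μ).reflect_lt (lt_of_le_of_lt hx hx₀)).le⟩
    obtain ⟨a, hS, ha⟩ := (monotone_cdf μ).preimage_Iic_eq_Iic (continuous_cdf μ) hne hbdd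
    rw [hS, ← ofReal_cdf, ha]

theorem map_cdf : μ.map (cdf μ) = volume.restrict (Icc 0 1) := by
  have : IsProbabilityMeasure (μ.map (cdf μ)) :=
    Measure.isProbabilityMeasure_map (monotone_cdf μ).measurable.aemeasurable
  refine Measure.ext_of_Iic _ _ fun u => ?_
  rw [Measure.map_apply (monotone_cdf μ).measurable measurableSet_Iic,
    measure_cdf_preimage_Iic, volume_restrict_Icc_zero_one_Iic]

end ProbabilityTheory

section Mixture

variable {Ω₁ Ω₂ : Type*} [MeasurableSpace Ω₁] [MeasurableSpace Ω₂]

lemma MeasurableEmbedding.inl : MeasurableEmbedding (Sum.inl : Ω₁ → Ω₁ ⊕ Ω₂) :=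
  ⟨Sum.inl_injective, measurable_inl, fun _ hs => hs.inl_image⟩

lemma MeasurableEmbedding.inr : MeasurableEmbedding (Sum.inr : Ω₂ → Ω₁ ⊕ Ω₂) :=
  ⟨Sum.inr_injective, measurable_inr, fun _ hs => hs.inr_image⟩

namespace MeasureTheory.Measure

noncomputable def mixture (t : ℝ) (μ₁ : Measure Ω₁) (μ₂ : Measure Ω₂) : Measure (Ω₁ ⊕ Ω₂) :=
  ENNReal.ofReal t • μ₁.map Sum.inl + ENNReal.ofReal (1 - t) • μ₂.map Sum.inr

variable {t : ℝ} {μ₁ : Measure Ω₁} {μ₂ : Measure Ω₂}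

lemma isProbabilityMeasure_mixture [IsProbabilityMeasure μ₁] [IsProbabilityMeasure μ₂]
    (ht : t ∈ Icc (0 : ℝ) 1) : IsProbabilityMeasure (mixture t μ₁ μ₂) := by
  constructor
  simp only [mixture, add_apply, smul_apply, map_apply measurable_inl MeasurableSet.univ,
    map_apply measurable_inr MeasurableSet.univ, preimage_univ, measure_univ, smul_eq_mul,
    mul_one]
  rw [← ENNReal.ofReal_add ht.1 (sub_nonneg.2 ht.2), add_sub_cancel, ENNReal.ofReal_one]

lemma map_sumElim_mixture {E : Type*} [MeasurableSpace E] {f : Ω₁ → E} {g : Ω₂ → E}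
    (hf : Measurable f) (hg : Measurable g) :
    (mixture t μ₁ μ₂).map (Sum.elim f g) =
      ENNReal.ofReal t • μ₁.map f + ENNReal.ofReal (1 - t) • μ₂.map g := by
  rw [mixture, Measure.map_add _ _ (hf.sumElim hg), Measure.map_smul, Measure.map_smul,
    map_map (hf.sumElim hg) measurable_inl, map_map (hf.sumElim hg) measurable_inr,
    Sum.elim_comp_inl, Sum.elim_comp_inr]

lemma integral_sumElim_mixture {f : Ω₁ → ℝ} {g : Ω₂ → ℝ} (ht : t ∈ Icc (0 : ℝ) 1)
    (hf : Integrable f μ₁) (hg : Integrable g μ₂) :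
    ∫ ω, Sum.elim f g ω ∂(mixture t μ₁ μ₂) = t * ∫ ω, f ω ∂μ₁ + (1 - t) * ∫ ω, g ω ∂μ₂ := by
  have hf' : Integrable (Sum.elim f g) (μ₁.map Sum.inl) :=
    MeasurableEmbedding.inl.integrable_map_iff.2 hf
  have hg' : Integrable (Sum.elim f g) (μ₂.map Sum.inr) :=
    MeasurableEmbedding.inr.integrable_map_iff.2 hg
  rw [mixture, integral_add_measure (hf'.smul_measure ENNReal.ofReal_ne_top)
      (hg'.smul_measure ENNReal.ofReal_ne_top), integral_smul_measure, integral_smul_measure,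
    MeasurableEmbedding.inl.integral_map, MeasurableEmbedding.inr.integral_map,
    ENNReal.toReal_ofReal ht.1, ENNReal.toReal_ofReal (sub_nonneg.2 ht.2)]
  rfl

end MeasureTheory.Measure

end Mixture

section UniformMarginals

variable {ι Ω : Type*} [MeasurableSpace Ω]

structure HasUniformMarginals (μ : Measure Ω) (U : Ω → ι → ℝ) : Prop where
  measurable : ∀ i, Measurable (U · i)
  map_eq : ∀ i, μ.map (U · i) = volume.restrict (Icc 0 1)

noncomputable def spearmanOfUniform (μ : Measure Ω) (U : Ω → ι → ℝ) : Matrix ι ι ℝ :=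
  Matrix.of fun i j => 12 * ∫ ω, U ω i * U ω j ∂μ - 3

namespace HasUniformMarginals

variable {μ : Measure Ω} {U : Ω → ι → ℝ}

lemma ae_mem_Icc (hU : HasUniformMarginals μ U) (i : ι) : ∀ᵐ ω ∂μ, U ω i ∈ Icc (0 : ℝ) 1 := by
  have h : ∀ᵐ u ∂μ.map (U · i), u ∈ Icc (0 : ℝ) 1 := by
    rw [hU.map_eq i]; exact ae_restrict_mem measurableSet_Icc
  exact ae_of_ae_map (hU.measurable i).aemeasurable h

lemma integrable_mul [IsFiniteMeasure μ] (hU : HasUniformMarginals μ U) (i j : ι) :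
    Integrable (fun ω => U ω i * U ω j) μ := by
  refine (integrable_const (1 : ℝ)).mono'
    ((hU.measurable i).mul (hU.measurable j)).aestronglyMeasurable ?_
  filter_upwards [hU.ae_mem_Icc i, hU.ae_mem_Icc j] with ω hi hj
  rw [Real.norm_eq_abs, abs_of_nonneg (mul_nonneg hi.1 hj.1)]
  exact mul_le_one₀ hi.2 hj.1 hj.2

lemma isSpearmanMatrix {d : ℕ} {Ω : Type} [MeasurableSpace Ω] {μ : Measure Ω}
    [IsProbabilityMeasure μ] {U : Ω → Fin d → ℝ} (hU : HasUniformMarginals μ U) :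
    IsSpearmanMatrix (spearmanOfUniform μ U) := by
  refine ⟨Ω, _, μ, inferInstance, U, hU.measurable, fun i x => ?_, fun i j => ?_⟩
  · rw [hU.map_eq]; exact measure_singleton x
  · simp only [spearmanOfUniform, Matrix.of_apply, hU.map_eq]
    congr 2
    refine integral_congr_ae ?_
    filter_upwards [hU.ae_mem_Icc i, hU.ae_mem_Icc j] with ω hi hj
    rw [cdf_volume_restrict_Icc_zero_one hi, cdf_volume_restrict_Icc_zero_one hj]

variable {Ω₁ Ω₂ : Type*} [MeasurableSpace Ω₁] [MeasurableSpace Ω₂] {t : ℝ}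
  {μ₁ : Measure Ω₁} {μ₂ : Measure Ω₂} {U₁ : Ω₁ → ι → ℝ} {U₂ : Ω₂ → ι → ℝ}

lemma sumElim (ht : t ∈ Icc (0 : ℝ) 1) (h₁ : HasUniformMarginals μ₁ U₁)
    (h₂ : HasUniformMarginals μ₂ U₂) :
    HasUniformMarginals (Measure.mixture t μ₁ μ₂) (Sum.elim U₁ U₂) where
  measurable i := by
    rw [Sum.comp_elim' (· i) U₁ U₂]; exact (h₁.measurable i).sumElim (h₂.measurable i)
  map_eq i := by
    rw [Sum.comp_elim' (· i) U₁ U₂,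
      Measure.map_sumElim_mixture (h₁.measurable i) (h₂.measurable i), h₁.map_eq, h₂.map_eq,
      ← add_smul, ← ENNReal.ofReal_add ht.1 (sub_nonneg.2 ht.2), add_sub_cancel,
      ENNReal.ofReal_one, one_smul]

lemma spearmanOfUniform_mixture [IsFiniteMeasure μ₁] [IsFiniteMeasure μ₂]
    (ht : t ∈ Icc (0 : ℝ) 1) (h₁ : HasUniformMarginals μ₁ U₁) (h₂ : HasUniformMarginals μ₂ U₂) :
    spearmanOfUniform (Measure.mixture t μ₁ μ₂) (Sum.elim U₁ U₂) =
      t • spearmanOfUniform μ₁ U₁ + (1 - t) • spearmanOfUniform μ₂ U₂ := by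
  ext i j
  simp only [spearmanOfUniform, Matrix.add_apply, Matrix.smul_apply, Matrix.of_apply,
    smul_eq_mul]
  rw [Sum.comp_elim' (fun v => v i * v j) U₁ U₂,
    Measure.integral_sumElim_mixture ht (h₁.integrable_mul i j) (h₂.integrable_mul i j)]
  ring

end HasUniformMarginals

end UniformMarginals

lemma IsSpearmanMatrix.exists_hasUniformMarginals {d : ℕ} {R : Matrix (Fin d) (Fin d) ℝ}
    (h : IsSpearmanMatrix R) :
    ∃ (Ω : Type) (_ : MeasurableSpace Ω) (μ : Measure Ω) (_ : IsProbabilityMeasure μ)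
      (U : Ω → Fin d → ℝ), HasUniformMarginals μ U ∧ R = spearmanOfUniform μ U := by
  obtain ⟨Ω, _, μ, _, X, hX, hatoms, hR⟩ := h
  have : ∀ i, IsProbabilityMeasure (μ.map (X · i)) :=
    fun i => Measure.isProbabilityMeasure_map (hX i).aemeasurable
  have : ∀ i, NullSingletonClass (μ.map (X · i)) := fun i => ⟨hatoms i⟩
  refine ⟨Ω, _, μ, inferInstance, fun ω i => cdf (μ.map (X · i)) (X ω i),
    ⟨fun i => (monotone_cdf _).measurable.comp (hX i), fun i => ?_⟩, Matrix.ext hR⟩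
  exact (Measure.map_map (monotone_cdf _).measurable (hX i)).symm.trans (map_cdf _)

/-- The set of d × d Spearman's rho matrices is convex. -/
theorem spearman_convex {d : ℕ} (R₁ R₂ : Matrix (Fin d) (Fin d) ℝ)
    (h₁ : IsSpearmanMatrix R₁) (h₂ : IsSpearmanMatrix R₂)
    (t : ℝ) (ht : t ∈ Set.Icc (0 : ℝ) 1) :
    IsSpearmanMatrix (t • R₁ + (1 - t) • R₂) := by
  obtain ⟨Ω₁, _, μ₁, _, U₁, hU₁, rfl⟩ := h₁.exists_hasUniformMarginals
  obtain ⟨Ω₂, _, μ₂, _, U₂, hU₂, rfl⟩ := h₂.exists_hasUniformMarginals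
  have := Measure.isProbabilityMeasure_mixture (μ₁ := μ₁) (μ₂ := μ₂) ht
  rw [← hU₁.spearmanOfUniform_mixture ht hU₂]
  exact (hU₁.sumElim ht hU₂).isSpearmanMatrix
end
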